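/- arXiv:1502.00482 — 5 statements merged into one kernel-verified Lean document; each statement's English description precedes it below -/
import Mathlib

section
/- Let (X,d) be a compact metric space and T : X → X a continuous map. Suppose T has a fixed point and there exists N ∈ ℕ such that for every pair of points x, y ∈ X there exists an integer i with 0 ≤ i ≤ N−1 and T^i(x) = T^i(y). Then T has the almost specification property; in fact it has the almost specification property with the constant mistake function g(n,ε) ≡ N and with constants k_g(ε) ≡ N. -/
open Filter Set

/-- A *mistake function* (with threshold `ε₀`): `g n ε` is nondecreasing in `n`,
`g n ε / n → 0`, and `g n ε = g n ε₀` for `ε ≥ ε₀`. -/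
def IsMistakeFunction (ε₀ : ℝ) (g : ℕ → ℝ → ℕ) : Prop :=
  0 < ε₀ ∧
  (∀ ε : ℝ, 0 < ε → ε < ε₀ → ∀ n : ℕ, g n ε ≤ g (n + 1) ε) ∧
  (∀ ε : ℝ, 0 < ε → ε < ε₀ →
    Filter.Tendsto (fun n : ℕ => (g n ε : ℝ) / n) Filter.atTop (nhds 0)) ∧
  (∀ ε : ℝ, ε₀ ≤ ε → ∀ n : ℕ, g n ε = g n ε₀)

/-- The `(g; n, ε)` Bowen ball `B_n(g; x, ε)`: points `y` that `ε`-trace the orbit of `x`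
along some `Λ ⊆ {0, …, n-1}` with `#Λ ≥ n - g(n,ε)`. -/
def mistakeBall {X : Type*} [MetricSpace X] (T : X → X) (g : ℕ → ℝ → ℕ)
    (n : ℕ) (x : X) (ε : ℝ) : Set X :=
  {y | ∃ Λ : Finset ℕ, Λ ⊆ Finset.range n ∧ n - g n ε ≤ Λ.card ∧
    ∀ j ∈ Λ, dist (T^[j] x) (T^[j] y) < ε}

/-- `T` has the almost specification property with mistake function `g` and constants `kg`. -/
def AlmostSpecWith {X : Type*} [MetricSpace X] (T : X → X) (g : ℕ → ℝ → ℕ)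
    (kg : ℝ → ℕ) : Prop :=
  ∀ m : ℕ, ∀ eps : Fin m → ℝ, (∀ j, 0 < eps j) →
    ∀ xs : Fin m → X, ∀ ns : Fin m → ℕ, (∀ j, kg (eps j) ≤ ns j) →
      ∃ z : X, ∀ j : Fin m,
        T^[∑ s ∈ Finset.Iio j, ns s] z ∈ mistakeBall T g (ns j) (xs j) (eps j)

/-- `T` has the almost specification property (for some mistake function). -/
def HasAlmostSpec {X : Type*} [MetricSpace X] (T : X → X) : Prop :=
  ∃ (ε₀ : ℝ) (g : ℕ → ℝ → ℕ), IsMistakeFunction ε₀ g ∧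
    ∃ kg : ℝ → ℕ, AlmostSpecWith T g kg

/-- `s_n(X, ε)`: the maximal cardinality of an `(n, ε)`-separated subset of `X`. -/
noncomputable def sepNum {X : Type*} [MetricSpace X] (T : X → X) (n : ℕ) (ε : ℝ) : ℕ :=
  sSup {k : ℕ | ∃ F : Finset X,
    (∀ x ∈ F, ∀ y ∈ F, x ≠ y → ∃ j < n, ε < dist (T^[j] x) (T^[j] y)) ∧ F.card = k}

/-- `s_n(g; X, ε)`: the maximal cardinality of a `(g; n, ε)`-separated subset of `X`. -/
noncomputable def sepNumG {X : Type*} [MetricSpace X] (T : X → X) (g : ℕ → ℝ → ℕ)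
    (n : ℕ) (ε : ℝ) : ℕ :=
  sSup {k : ℕ | ∃ F : Finset X,
    (∀ x ∈ F, ∀ y ∈ F, x ≠ y →
      g n ε < Set.ncard {j : ℕ | j < n ∧ ε < dist (T^[j] x) (T^[j] y)}) ∧ F.card = k}

/-- Topological entropy `h_top(T) = lim_{ε→0} limsup_n (1/n) log s_n(X,ε)`; since the
inner quantity is nonincreasing in `ε`, the limit as `ε → 0⁺` is the supremum over `ε > 0`. -/
noncomputable def topEntropy {X : Type*} [MetricSpace X] (T : X → X) : EReal :=
  ⨆ ε : {e : ℝ // 0 < e}, Filter.atTop.limsup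
    (fun n : ℕ => ((Real.log (sepNum T n ε.1) / n : ℝ) : EReal))

/-! Every orbit merges with the orbit of a fixed point `z` within `N` steps, so `z` itself
shadows every orbit segment with at most `N` mistakes: the single point `z` realises any
specification. -/

theorem isMistakeFunction_const {ε₀ : ℝ} (hε₀ : 0 < ε₀) (N : ℕ) :
    IsMistakeFunction ε₀ (fun _ _ => N) :=
  ⟨hε₀, fun _ _ _ _ => le_rfl, fun _ _ _ => tendsto_const_div_atTop_nhds_zero_nat (N : ℝ),
    fun _ _ _ => rfl⟩

theorem Function.IsFixedPt.iterate_eq_of_le {X : Type*} {T : X → X} {x z : X}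
    (hz : Function.IsFixedPt T z) {i k : ℕ} (hx : T^[i] x = z) (hik : i ≤ k) :
    T^[k] x = z := by
  rw [← Nat.sub_add_cancel hik, Function.iterate_add_apply, hx]
  exact (hz.iterate _).eq

theorem Function.IsFixedPt.mem_mistakeBall {X : Type*} [MetricSpace X] {T : X → X} {z : X}
    (hz : Function.IsFixedPt T z) {g : ℕ → ℝ → ℕ} {n : ℕ} {x : X} {ε : ℝ} (hε : 0 < ε)
    {i : ℕ} (hx : T^[i] x = z) (hi : i ≤ g n ε) :
    z ∈ mistakeBall T g n x ε := by
  refine ⟨Finset.Ico i n, fun k hk => ?_, ?_, fun k hk => ?_⟩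
  · exact Finset.mem_range.mpr (Finset.mem_Ico.mp hk).2
  · rw [Nat.card_Ico]
    exact Nat.sub_le_sub_left hi n
  · rw [hz.iterate_eq_of_le hx (Finset.mem_Ico.mp hk).1, (hz.iterate k).eq, dist_self]
    exact hε

theorem almostSpecWith_const_of_collision {X : Type*} [MetricSpace X] {T : X → X} {z : X}
    (hz : Function.IsFixedPt T z) {N : ℕ} (hN : ∀ x y : X, ∃ i < N, T^[i] x = T^[i] y)
    (kg : ℝ → ℕ) :
    AlmostSpecWith T (fun _ _ => N) kg := by
  intro m eps heps xs ns _
  refine ⟨z, fun j => ?_⟩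
  obtain ⟨i, hiN, hi⟩ := hN (xs j) z
  rw [(hz.iterate _).eq]
  exact hz.mem_mistakeBall (heps j) (hi.trans (hz.iterate i).eq) hiN.le

theorem fixed_point_collision_almostSpec_general {X : Type*} [MetricSpace X]
    (T : X → X) (hfix : ∃ z : X, T z = z) (N : ℕ)
    (hN : ∀ x y : X, ∃ i < N, T^[i] x = T^[i] y) :
    HasAlmostSpec T ∧ AlmostSpecWith T (fun _ _ => N) (fun _ => N) := by
  obtain ⟨z, hz⟩ := hfix
  have hspec := almostSpecWith_const_of_collision hz hN (fun _ => N)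
  exact ⟨⟨1, _, isMistakeFunction_const one_pos N, _, hspec⟩, hspec⟩

/-- if `T` has a fixed point and all orbits collide within `N` steps, then `T`
has the almost specification property, in fact with constant mistake function `g ≡ N`
and constants `k_g ≡ N`. -/
theorem fixed_point_collision_almostSpec {X : Type*} [MetricSpace X] [CompactSpace X]
    (T : X → X) (hT : Continuous T) (hfix : ∃ z : X, T z = z) (N : ℕ)
    (hN : ∀ x y : X, ∃ i < N, T^[i] x = T^[i] y) :
    HasAlmostSpec T ∧ AlmostSpecWith T (fun _ _ => N) (fun _ => N) :=
  fixed_point_collision_almostSpec_general T hfix N hN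
end

section
/- Let (X,d) be a compact metric space and T : X → X a continuous map. Suppose T has a fixed point and there exists N ∈ ℕ such that for every pair of points x, y ∈ X there exists an integer i with 0 ≤ i ≤ N−1 and T^i(x) = T^i(y). Then for every ε > 0 and every n ≥ N one has s_n(X,ε) = s_N(X,ε). -/
open Filter Set

open Function

lemma iterate_eq_of_iterate_eq_of_le {X : Type*} {T : X → X} {x y : X} {i j : ℕ}
    (h : T^[i] x = T^[i] y) (hij : i ≤ j) : T^[j] x = T^[j] y := by
  obtain ⟨k, rfl⟩ := Nat.exists_eq_add_of_le hij
  rw [add_comm, iterate_add_apply, iterate_add_apply, h]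

lemma lt_of_iterate_eq_of_lt_dist {X : Type*} [MetricSpace X] {T : X → X} {x y : X}
    {i j : ℕ} {ε : ℝ} (hε : 0 ≤ ε) (h : T^[i] x = T^[i] y)
    (hj : ε < dist (T^[j] x) (T^[j] y)) : j < i := by
  by_contra! hij
  rw [iterate_eq_of_iterate_eq_of_le h hij, dist_self] at hj
  exact hj.not_ge hε

lemma exists_lt_dist_iterate_iff_of_iterate_eq {X : Type*} [MetricSpace X] {T : X → X}
    {x y : X} {i m n : ℕ} {ε : ℝ} (hε : 0 ≤ ε) (h : T^[i] x = T^[i] y) (him : i ≤ m)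
    (hmn : m ≤ n) :
    (∃ j < n, ε < dist (T^[j] x) (T^[j] y)) ↔ ∃ j < m, ε < dist (T^[j] x) (T^[j] y) :=
  ⟨fun ⟨j, _, hj⟩ => ⟨j, (lt_of_iterate_eq_of_lt_dist hε h hj).trans_le him, hj⟩,
    fun ⟨j, hjm, hj⟩ => ⟨j, hjm.trans_le hmn, hj⟩⟩

lemma sepNum_congr {X : Type*} [MetricSpace X] {T : X → X} {m n : ℕ} {ε : ℝ}
    (h : ∀ x y : X, (∃ j < n, ε < dist (T^[j] x) (T^[j] y)) ↔
      ∃ j < m, ε < dist (T^[j] x) (T^[j] y)) :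
    sepNum T n ε = sepNum T m ε := by
  simp only [sepNum, h]

theorem sepNum_stabilizes_general {X : Type*} [MetricSpace X]
    (T : X → X) (N : ℕ)
    (hN : ∀ x y : X, ∃ i < N, T^[i] x = T^[i] y) :
    ∀ ε : ℝ, 0 < ε → ∀ n : ℕ, N ≤ n → sepNum T n ε = sepNum T N ε := by
  intro ε hε n hn
  refine sepNum_congr fun x y => ?_
  obtain ⟨i, hiN, hi⟩ := hN x y
  exact exists_lt_dist_iterate_iff_of_iterate_eq hε.le hi hiN.le hn

/-- if `T` has a fixed point and all orbits collide within `N` steps, then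
`s_n(X, ε) = s_N(X, ε)` for every `ε > 0` and every `n ≥ N`. -/
theorem sepNum_stabilizes {X : Type*} [MetricSpace X] [CompactSpace X]
    (T : X → X) (hT : Continuous T) (hfix : ∃ z : X, T z = z) (N : ℕ)
    (hN : ∀ x y : X, ∃ i < N, T^[i] x = T^[i] y) :
    ∀ ε : ℝ, 0 < ε → ∀ n : ℕ, N ≤ n → sepNum T n ε = sepNum T N ε :=
  sepNum_stabilizes_general T N hN
end

section
/- Let (X,d) be a compact metric space and T : X → X a continuous map satisfying the almost specification property with mistake function g (with constants k_g), where moreover g(n,ε) is nondecreasing in ε. Suppose there exist real numbers σ > 2δ > 0, an integer N ∈ ℕ with N ≥ k_g(δ), and points x, y ∈ X that are (2g; N, σ)-separated, i.e. #{j : 0 ≤ j ≤ N−1, d(T^j x, T^j y) > σ} > 2g(N,σ). Then h_top(T) ≥ (log 2)/N; in particular h_top(T) > 0. -/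
/-!
Gluing `m` orbit segments of length `N`, each chosen to be either the segment of `x` or that
of `y`, specification yields `2^m` points. Two such points that follow different choices in
block `j` both `δ`-shadow their templates there, each missing at most `g(N, δ) ≤ g(N, σ)`
times; since `x` and `y` are `σ`-apart more than `2 g(N, σ)` times, some time of that block
is shadowed by both, and the two points are `(σ - 2δ)`-apart at it. Hence
`s_{mN}(X, σ - 2δ) ≥ 2^m`, which gives entropy at least `log 2 / N`.
-/

open Filter Set

theorem exists_forall_card_le_of_lt_dist {α Y : Type*} [MetricSpace Y] [CompactSpace Y]
    (f : α → Y) {ε : ℝ} (hε : 0 < ε) :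
    ∃ C : ℕ, ∀ F : Finset α, (∀ a ∈ F, ∀ b ∈ F, a ≠ b → ε < dist (f a) (f b)) →
      F.card ≤ C := by
  obtain ⟨t, ht, hcover⟩ :=
    Metric.totallyBounded_iff.1 (isCompact_univ (X := Y)).totallyBounded (ε / 2) (half_pos hε)
  refine ⟨ht.toFinset.card, fun F hF => ?_⟩
  have hcenter : ∀ a, ∃ c ∈ ht.toFinset, f a ∈ Metric.ball c (ε / 2) := fun a => by
    simpa using hcover (mem_univ (f a))
  choose center hcenter_mem hcenter_near using hcenter
  refine Finset.card_le_card_of_injOn center (fun a _ => hcenter_mem a) fun a ha b hb hab => ?_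
  by_contra hne
  have hfa := Metric.mem_ball.1 (hcenter_near a)
  have hfb := Metric.mem_ball'.1 (hcenter_near b)
  rw [hab] at hfa
  linarith [hF a ha b hb hne, dist_triangle (f a) (center b) (f b)]

theorem card_sdiff_le_of_card_sub_le {α : Type*} [DecidableEq α] {S Λ U : Finset α} {k : ℕ}
    (hS : S ⊆ U) (hΛ : Λ ⊆ U) (hk : U.card - k ≤ Λ.card) : (S \ Λ).card ≤ k := by
  have := Finset.card_le_card (Finset.sdiff_subset_sdiff hS (le_refl Λ))
  rw [Finset.card_sdiff_of_subset hΛ] at this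
  omega

theorem nonempty_inter_inter_of_card_sdiff_add_lt {α : Type*} [DecidableEq α] {S A B : Finset α}
    (h : (S \ A).card + (S \ B).card < S.card) : (S ∩ A ∩ B).Nonempty := by
  have hcover : S ⊆ S ∩ A ∩ B ∪ (S \ A ∪ S \ B) := fun i hi => by
    by_cases hA : i ∈ A <;> by_cases hB : i ∈ B <;> simp [hi, hA, hB]
  have := (Finset.card_le_card hcover).trans <| (Finset.card_union_le _ _).trans <|
    Nat.add_le_add_left (Finset.card_union_le _ _) _
  exact Finset.card_pos.1 (by omega)

section Separated

variable {X : Type*} [MetricSpace X] (T : X → X)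

theorem bddAbove_card_separated [CompactSpace X] (n : ℕ) {ε : ℝ} (hε : 0 < ε) :
    BddAbove {k : ℕ | ∃ F : Finset X,
      (∀ x ∈ F, ∀ y ∈ F, x ≠ y → ∃ j < n, ε < dist (T^[j] x) (T^[j] y)) ∧ F.card = k} := by
  obtain ⟨C, hC⟩ :=
    exists_forall_card_le_of_lt_dist (fun a (j : Fin n) => T^[j] a) hε
  refine ⟨C, ?_⟩
  rintro k ⟨F, hF, rfl⟩
  refine hC F fun a ha b hb hab => ?_
  obtain ⟨j, hj, hjε⟩ := hF a ha b hb hab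
  exact hjε.trans_le (dist_le_pi_dist (fun j : Fin n => T^[j] a) (fun j => T^[j] b) ⟨j, hj⟩)

theorem card_le_sepNum [CompactSpace X] {ι : Type*} [Fintype ι] (z : ι → X) (n : ℕ) {ε : ℝ}
    (hε : 0 < ε)
    (hz : Pairwise fun a b => ∃ j < n, ε < dist (T^[j] (z a)) (T^[j] (z b))) :
    Fintype.card ι ≤ sepNum T n ε := by
  classical
  have hinj : Function.Injective z := fun a b hab => by
    by_contra hne
    obtain ⟨j, -, hj⟩ := hz hne
    rw [hab, dist_self] at hj
    linarith
  refine le_csSup (bddAbove_card_separated T n hε) ⟨Finset.univ.image z, ?_, ?_⟩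
  · simp only [Finset.mem_image, Finset.mem_univ, true_and]
    rintro _ ⟨a, rfl⟩ _ ⟨b, rfl⟩ hab
    exact hz fun h => hab (congrArg z h)
  · rw [Finset.card_image_of_injective _ hinj, Finset.card_univ]

theorem le_topEntropy_of_pow_le_sepNum {ε : ℝ} (hε : 0 < ε) {N : ℕ} (hN : 0 < N) {c : ℕ}
    (hc : 0 < c) (hpow : ∀ m : ℕ, c ^ m ≤ sepNum T (m * N) ε) :
    ((Real.log c / N : ℝ) : EReal) ≤ topEntropy T := by
  refine le_trans ?_ (le_iSup (fun e : {e : ℝ // 0 < e} => atTop.limsup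
    fun n : ℕ => ((Real.log (sepNum T n e.1) / n : ℝ) : EReal)) ⟨ε, hε⟩)
  refine le_limsup_of_frequently_le ?_ ⟨⊤, Eventually.of_forall fun _ => le_top⟩
  refine frequently_atTop.2 fun n₀ => ⟨(n₀ + 1) * N, by nlinarith, ?_⟩
  have hlog : ((n₀ + 1 : ℕ) : ℝ) * Real.log c ≤ Real.log (sepNum T ((n₀ + 1) * N) ε) := by
    rw [← Real.log_pow]
    exact Real.log_le_log (by positivity) (by exact_mod_cast hpow (n₀ + 1))
  have hNpos : (0 : ℝ) < N := by exact_mod_cast hN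
  rw [EReal.coe_le_coe_iff, Nat.cast_mul, div_le_div_iff₀ hNpos (by positivity)]
  nlinarith

theorem exists_lt_dist_of_mem_mistakeBall {g : ℕ → ℝ → ℕ} {N : ℕ} {σ δ : ℝ} {x y u v : X}
    (hu : u ∈ mistakeBall T g N x δ) (hv : v ∈ mistakeBall T g N y δ)
    (hsep : 2 * g N δ < ((Finset.range N).filter fun j => σ < dist (T^[j] x) (T^[j] y)).card) :
    ∃ i < N, σ - 2 * δ < dist (T^[i] u) (T^[i] v) := by
  obtain ⟨Λ, hΛ, hΛcard, hxu⟩ := hu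
  obtain ⟨Λ', hΛ', hΛ'card, hyv⟩ := hv
  set S := (Finset.range N).filter fun j => σ < dist (T^[j] x) (T^[j] y)
  have hSN : S ⊆ Finset.range N := Finset.filter_subset _ _
  have hmiss := card_sdiff_le_of_card_sub_le hSN hΛ (by simpa using hΛcard)
  have hmiss' := card_sdiff_le_of_card_sub_le hSN hΛ' (by simpa using hΛ'card)
  obtain ⟨i, hi⟩ := nonempty_inter_inter_of_card_sdiff_add_lt (S := S) (A := Λ) (B := Λ')
    (by omega)
  simp only [S, Finset.mem_inter, Finset.mem_filter, Finset.mem_range] at hi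
  obtain ⟨⟨⟨hiN, hxy⟩, hiΛ⟩, hiΛ'⟩ := hi
  refine ⟨i, hiN, ?_⟩
  linarith [hxu i hiΛ, hyv i hiΛ', dist_comm (T^[i] v) (T^[i] y),
    dist_triangle4 (T^[i] x) (T^[i] u) (T^[i] v) (T^[i] y)]

theorem two_pow_le_sepNum [CompactSpace X] {g : ℕ → ℝ → ℕ} {kg : ℝ → ℕ}
    (hspec : AlmostSpecWith T g kg) {σ δ : ℝ} (hδ : 0 < δ) (hε : 0 < σ - 2 * δ) {N : ℕ}
    (hNk : kg δ ≤ N) {x y : X}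
    (hsep : 2 * g N δ < ((Finset.range N).filter fun j => σ < dist (T^[j] x) (T^[j] y)).card)
    (m : ℕ) : 2 ^ m ≤ sepNum T (m * N) (σ - 2 * δ) := by
  have hglue : ∀ w : Fin m → Bool, ∃ z : X, ∀ j : Fin m,
      T^[j * N] z ∈ mistakeBall T g N (cond (w j) x y) δ := fun w => by
    obtain ⟨z, hz⟩ := hspec m (fun _ => δ) (fun _ => hδ) (fun j => cond (w j) x y)
      (fun _ => N) (fun _ => hNk)
    exact ⟨z, fun j => by simpa [Finset.sum_const, Fin.card_Iio] using hz j⟩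
  choose z hz using hglue
  suffices hzsep : Pairwise fun w w' =>
      ∃ i < m * N, σ - 2 * δ < dist (T^[i] (z w)) (T^[i] (z w')) by
    simpa using card_le_sepNum T z (m * N) hε hzsep
  intro w w' hww'
  obtain ⟨j, hj⟩ := Function.ne_iff.1 hww'
  have hblock : ∃ i < N,
      σ - 2 * δ < dist (T^[i] (T^[j * N] (z w))) (T^[i] (T^[j * N] (z w'))) := by
    have hw := hz w j
    have hw' := hz w' j
    cases hb : w j <;> cases hb' : w' j <;> rw [hb] at hw <;> rw [hb'] at hw'
    · exact absurd (hb.trans hb'.symm) hj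
    · obtain ⟨i, hiN, hi⟩ := exists_lt_dist_of_mem_mistakeBall T hw' hw hsep
      exact ⟨i, hiN, by rwa [dist_comm]⟩
    · exact exists_lt_dist_of_mem_mistakeBall T hw hw' hsep
    · exact absurd (hb.trans hb'.symm) hj
  obtain ⟨i, hiN, hi⟩ := hblock
  refine ⟨i + j * N, ?_, by rwa [Function.iterate_add_apply, Function.iterate_add_apply]⟩
  nlinarith [j.2]

end Separated

theorem entropy_positive_of_separated_general {X : Type*} [MetricSpace X] [CompactSpace X]
    (T : X → X) (g : ℕ → ℝ → ℕ)
    (hmono : ∀ n : ℕ, ∀ ε ε' : ℝ, 0 < ε → ε ≤ ε' → g n ε ≤ g n ε')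
    (kg : ℝ → ℕ) (hspec : AlmostSpecWith T g kg)
    (σ δ : ℝ) (hδ : 0 < δ) (hσ : 2 * δ < σ)
    (N : ℕ) (hNk : kg δ ≤ N) (x y : X)
    (hsep : 2 * g N σ < Set.ncard {j : ℕ | j < N ∧ σ < dist (T^[j] x) (T^[j] y)}) :
    ((Real.log 2 / N : ℝ) : EReal) ≤ topEntropy T ∧ 0 < topEntropy T := by
  have hε : 0 < σ - 2 * δ := by linarith
  have hsepδ : 2 * g N δ <
      ((Finset.range N).filter fun j => σ < dist (T^[j] x) (T^[j] y)).card := by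
    have hcoe : {j : ℕ | j < N ∧ σ < dist (T^[j] x) (T^[j] y)} =
        ↑((Finset.range N).filter fun j => σ < dist (T^[j] x) (T^[j] y)) := by
      ext j; simp
    rw [hcoe, ncard_coe_finset] at hsep
    linarith [hmono N δ σ hδ (by linarith)]
  have hN : 0 < N := by
    obtain ⟨j, hj⟩ := Finset.card_pos.1 ((Nat.zero_le _).trans_lt hsepδ)
    exact Nat.zero_lt_of_lt (Finset.mem_range.1 (Finset.mem_filter.1 hj).1)
  have hentropy := le_topEntropy_of_pow_le_sepNum T hε hN two_pos
    (two_pow_le_sepNum T hspec hδ hε hNk hsepδ)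
  push_cast at hentropy
  refine ⟨hentropy, lt_of_lt_of_le ?_ hentropy⟩
  exact_mod_cast div_pos (Real.log_pos one_lt_two) (Nat.cast_pos.2 hN)

/-- if `T` has almost specification with mistake function `g` (nondecreasing
in `ε`) and there are `σ > 2δ > 0`, `N ≥ k_g(δ)` and `(2g; N, σ)`-separated points `x, y`,
then `h_top(T) ≥ (log 2) / N > 0`. -/
theorem entropy_positive_of_separated {X : Type*} [MetricSpace X] [CompactSpace X]
    (T : X → X) (hT : Continuous T) (ε₀ : ℝ) (g : ℕ → ℝ → ℕ)
    (hg : IsMistakeFunction ε₀ g)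
    (hmono : ∀ n : ℕ, ∀ ε ε' : ℝ, 0 < ε → ε ≤ ε' → g n ε ≤ g n ε')
    (kg : ℝ → ℕ) (hspec : AlmostSpecWith T g kg)
    (σ δ : ℝ) (hδ : 0 < δ) (hσ : 2 * δ < σ)
    (N : ℕ) (hNk : kg δ ≤ N) (x y : X)
    (hsep : 2 * g N σ < Set.ncard {j : ℕ | j < N ∧ σ < dist (T^[j] x) (T^[j] y)}) :
    ((Real.log 2 / N : ℝ) : EReal) ≤ topEntropy T ∧ 0 < topEntropy T :=
  entropy_positive_of_separated_general T g hmono kg hspec σ δ hδ hσ N hNk x y hsep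
end

section
/- Let (X,d) be a compact metric space and T : X → X a continuous map satisfying the almost specification property with mistake function g (with constants k_g). If h_top(T) > 0, then there exist real numbers σ > 2δ > 0, an integer N ∈ ℕ with N ≥ k_g(δ), and points x, y ∈ X that are (2g; N, σ)-separated, i.e. #{j : 0 ≤ j ≤ N−1, d(T^j x, T^j y) > σ} > 2g(N,σ). -/
open Filter Set

/-! Positive entropy yields `ε, c > 0` and infinitely many `n` admitting an `(n, ε)`-separated
set of more than `e^{cn}` points. Take `σ ≤ ε / 2` below the threshold of `g` and a finite
`σ`-net `P`. If no two orbits were `σ`-apart at more than `K = 2 g(n, σ)` times before `n`, then a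
point of an `(n, 2σ)`-separated set would be determined by the times (at most `K` of them) at which
its orbit is `σ`-far from a fixed orbit, together with a net point near its orbit at each of these
times. So the set would have at most `(e · #P · n / K)^K = e^{o(n)}` points, as `K / n → 0`. -/

open Real
open scoped Finset Topology

lemma card_powerset_filter_card_le_le {α : Type*} (s : Finset α) {K : ℕ} (hK : K ≤ #s) :
    (#{S ∈ s.powerset | #S ≤ K} : ℝ) ≤ (exp 1 * #s / K) ^ K := by
  rcases K.eq_zero_or_pos with rfl | hK0
  · simpa using Finset.card_le_one.2 fun a ha b hb => by simp_all
  set t : ℝ := K / #s with ht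
  have hs : (0 : ℝ) < #s := by exact_mod_cast hK0.trans_le hK
  have ht0 : 0 < t := by positivity
  have ht1 : t ≤ 1 := div_le_one_of_le₀ (by exact_mod_cast hK) hs.le
  -- weight each subset `S` by `t ^ #S` and compare with the binomial expansion of `(t + 1) ^ #s`
  have hweighted : (#{S ∈ s.powerset | #S ≤ K} : ℝ) * t ^ K ≤ exp K := calc
    _ = ∑ S ∈ s.powerset with #S ≤ K, t ^ K := by rw [Finset.sum_const, nsmul_eq_mul]
    _ ≤ ∑ S ∈ s.powerset with #S ≤ K, t ^ #S :=
        Finset.sum_le_sum fun S hS => pow_le_pow_of_le_one ht0.le ht1 (Finset.mem_filter.1 hS).2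
    _ ≤ ∑ S ∈ s.powerset, t ^ #S :=
        Finset.sum_le_sum_of_subset_of_nonneg (Finset.filter_subset _ _) fun _ _ _ => by positivity
    _ = (t + 1) ^ #s := by simpa using Finset.sum_pow_mul_eq_add_pow t 1 s
    _ ≤ exp t ^ #s := by gcongr; exact add_one_le_exp t
    _ = exp K := by rw [← exp_nat_mul, ht]; field_simp
  calc _ ≤ exp K / t ^ K := by rw [le_div_iff₀ (by positivity)]; exact hweighted
    _ = _ := by rw [ht, ← exp_one_pow, ← div_pow]; congr 1; field_simp

lemma tendsto_log_pow_div_atTop {K : ℕ → ℕ} (hK : Tendsto (fun n => (K n : ℝ) / n) atTop (𝓝 0))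
    (m : ℝ) : Tendsto (fun n : ℕ => log ((m * n / K n) ^ K n) / n) atTop (𝓝 0) := by
  rcases eq_or_ne m 0 with rfl | hm
  · simp
  have hlim : Tendsto (fun n => (K n : ℝ) / n * log m + negMulLog ((K n : ℝ) / n)) atTop (𝓝 0) := by
    simpa using (hK.mul_const (log m)).add ((continuous_negMulLog.tendsto 0).comp hK)
  refine hlim.congr' ?_
  filter_upwards [eventually_gt_atTop 0] with n hn
  rcases (K n).eq_zero_or_pos with hK0 | hK0
  · simp [hK0]
  have hn' : (n : ℝ) ≠ 0 := by positivity
  have hK' : (K n : ℝ) ≠ 0 := by positivity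
  rw [log_pow, log_div (by positivity) hK', log_mul hm hn', negMulLog, log_div hK' hn']
  field_simp
  ring

section Counting

variable {X : Type*} [MetricSpace X]

def IsOrbitSeparated (T : X → X) (n : ℕ) (ε : ℝ) (F : Finset X) : Prop :=
  ∀ x ∈ F, ∀ y ∈ F, x ≠ y → ∃ j < n, ε < dist (T^[j] x) (T^[j] y)

noncomputable def farTimes (T : X → X) (n : ℕ) (σ : ℝ) (x y : X) : Finset ℕ :=
  {j ∈ Finset.range n | σ < dist (T^[j] x) (T^[j] y)}

variable {T : X → X}

lemma ncard_eq_card_farTimes (n : ℕ) (σ : ℝ) (x y : X) :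
    {j | j < n ∧ σ < dist (T^[j] x) (T^[j] y)}.ncard = #(farTimes T n σ x y) := by
  rw [← Set.ncard_coe_finset]
  simp [farTimes]

lemma sepNum_le {n : ℕ} {ε : ℝ} {B : ℕ} (h : ∀ F, IsOrbitSeparated T n ε F → #F ≤ B) :
    sepNum T n ε ≤ B :=
  csSup_le' (by rintro _ ⟨F, hF, rfl⟩; exact h F hF)

lemma card_filter_farTimes_eq_le {n : ℕ} {σ : ℝ} {P F : Finset X} {np : X → X}
    (hnp : ∀ x, np x ∈ P ∧ dist x (np x) < σ) (hF : IsOrbitSeparated T n (2 * σ) F)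
    (x₀ : X) (S : Finset ℕ) :
    #{y ∈ F | farTimes T n σ x₀ y = S} ≤ #P ^ #S := by
  classical
  calc _ ≤ #(S.pi fun _ => P) := by
        refine Finset.card_le_card_of_injOn (fun y j _ => np (T^[j] y))
          (fun y _ => Finset.mem_pi.2 fun j _ => (hnp _).1) ?_
        intro y hy y' hy' heq
        simp only [Finset.coe_filter, Set.mem_ofPred_eq] at hy hy'
        by_contra hne
        obtain ⟨j, hj, hsep⟩ := hF y hy.1 y' hy'.1 hne
        have hclose : dist (T^[j] y) (T^[j] y') ≤ 2 * σ := by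
          by_cases hjS : j ∈ S
          · have hp : np (T^[j] y) = np (T^[j] y') := congr_fun (congr_fun heq j) hjS
            calc dist (T^[j] y) (T^[j] y')
                ≤ dist (T^[j] y) (np (T^[j] y)) + dist (T^[j] y') (np (T^[j] y')) := by
                  rw [hp]; exact dist_triangle_right _ _ _
              _ ≤ 2 * σ := by linarith [(hnp (T^[j] y)).2, (hnp (T^[j] y')).2]
          · have hnear : ∀ z, farTimes T n σ x₀ z = S → dist (T^[j] x₀) (T^[j] z) ≤ σ := by
              intro z hz
              by_contra! hfar
              exact hjS (hz ▸ Finset.mem_filter.2 ⟨Finset.mem_range.2 hj, hfar⟩)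
            calc dist (T^[j] y) (T^[j] y') ≤ dist (T^[j] x₀) (T^[j] y) + dist (T^[j] x₀) (T^[j] y') :=
                  dist_triangle_left _ _ _
              _ ≤ 2 * σ := by linarith [hnear y hy.2, hnear y' hy'.2]
        linarith
    _ = #P ^ #S := by rw [Finset.card_pi, Finset.prod_const]

lemma card_le_of_isOrbitSeparated {n K : ℕ} {σ : ℝ} {P F : Finset X}
    (hP : ∀ x, ∃ p ∈ P, dist x p < σ) (hF : IsOrbitSeparated T n (2 * σ) F)
    (hfar : ∀ x y, #(farTimes T n σ x y) ≤ K) :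
    #F ≤ #P ^ K * #{S ∈ (Finset.range n).powerset | #S ≤ K} := by
  classical
  rcases F.eq_empty_or_nonempty with rfl | ⟨x₀, -⟩
  · simp
  choose np hnp using hP
  have hP : 0 < #P := Finset.card_pos.2 ⟨_, (hnp x₀).1⟩
  refine Finset.card_le_mul_card_image_of_maps_to (f := farTimes T n σ x₀)
    (fun y _ => Finset.mem_filter.2 ⟨Finset.mem_powerset.2 (Finset.filter_subset _ _), hfar x₀ y⟩)
    _ fun S hS => ?_
  exact (card_filter_farTimes_eq_le hnp hF x₀ S).trans
    (Nat.pow_le_pow_right hP (Finset.mem_filter.1 hS).2)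

lemma sepNum_le_pow_of_card_farTimes_le {n K : ℕ} {σ ε : ℝ} {P : Finset X}
    (hP : ∀ x, ∃ p ∈ P, dist x p < σ) (hσε : 2 * σ ≤ ε) (hKn : K ≤ n)
    (hfar : ∀ x y, #(farTimes T n σ x y) ≤ K) :
    (sepNum T n ε : ℝ) ≤ (exp 1 * #P * n / K) ^ K := by
  have hsep : sepNum T n ε ≤ #P ^ K * #{S ∈ (Finset.range n).powerset | #S ≤ K} :=
    sepNum_le fun F hF => card_le_of_isOrbitSeparated hP
      (fun x hx y hy hxy => (hF x hx y hy hxy).imp fun _ ⟨hj, hd⟩ => ⟨hj, hσε.trans_lt hd⟩) hfar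
  calc (sepNum T n ε : ℝ) ≤ #P ^ K * #{S ∈ (Finset.range n).powerset | #S ≤ K} := by
        exact_mod_cast hsep
    _ ≤ #P ^ K * (exp 1 * n / K) ^ K := by
        gcongr
        simpa using card_powerset_filter_card_le_le (Finset.range n) (by simpa using hKn)
    _ = (exp 1 * #P * n / K) ^ K := by rw [← mul_pow]; ring_nf

end Counting

lemma exists_finset_forall_exists_dist_lt {X : Type*} [MetricSpace X] [CompactSpace X] {σ : ℝ}
    (hσ : 0 < σ) : ∃ P : Finset X, ∀ x, ∃ p ∈ P, dist x p < σ := by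
  obtain ⟨t, -, ht, hcov⟩ := finite_cover_balls_of_compact (isCompact_univ (X := X)) hσ
  refine ⟨ht.toFinset, fun x => ?_⟩
  obtain ⟨p, hp, hx⟩ := Set.mem_iUnion₂.1 (hcov (Set.mem_univ x))
  exact ⟨p, ht.mem_toFinset.2 hp, hx⟩

lemma exists_frequently_lt_log_sepNum {X : Type*} [MetricSpace X] {T : X → X}
    (h : 0 < topEntropy T) : ∃ ε > 0, ∃ c > 0, ∃ᶠ n in atTop, c < log (sepNum T n ε) / n := by
  obtain ⟨⟨ε, hε⟩, hlt⟩ := lt_iSup_iff.1 h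
  obtain ⟨c, hc, hcl⟩ := EReal.lt_iff_exists_real_btwn.1 hlt
  exact ⟨ε, hε, c, EReal.coe_pos.1 hc,
    (frequently_lt_of_lt_limsup (by isBoundedDefault) hcl).mono fun _ hn => EReal.coe_lt_coe_iff.1 hn⟩

theorem separated_of_entropy_positive_general {X : Type*} [MetricSpace X] [CompactSpace X]
    (T : X → X) (ε₀ : ℝ) (g : ℕ → ℝ → ℕ)
    (hg : IsMistakeFunction ε₀ g)
    (kg : ℝ → ℕ)
    (hpos : 0 < topEntropy T) :
    ∃ σ δ : ℝ, 0 < δ ∧ 2 * δ < σ ∧ ∃ N : ℕ, kg δ ≤ N ∧ ∃ x y : X,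
      2 * g N σ < Set.ncard {j : ℕ | j < N ∧ σ < dist (T^[j] x) (T^[j] y)} := by
  obtain ⟨hε₀, -, hg_lim, -⟩ := hg
  obtain ⟨ε, hε, c, hc, hfreq⟩ := exists_frequently_lt_log_sepNum hpos
  set σ := min (ε / 2) (ε₀ / 2)
  have hσ : 0 < σ := by positivity
  obtain ⟨P, hP⟩ := exists_finset_forall_exists_dist_lt (X := X) hσ
  set K : ℕ → ℕ := fun n => 2 * g n σ
  have hK : Tendsto (fun n => (K n : ℝ) / n) atTop (𝓝 0) := by
    simpa [K, mul_div_assoc] using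
      (hg_lim σ hσ ((min_le_right _ _).trans_lt (half_lt_self hε₀))).const_mul 2
  refine ⟨σ, σ / 3, by positivity, by linarith, ?_⟩
  by_contra! hfar
  have hbound : ∀ᶠ n in atTop, (sepNum T n ε : ℝ) ≤ (exp 1 * #P * n / K n) ^ K n := by
    filter_upwards [eventually_ge_atTop (kg (σ / 3)), hK.eventually_lt_const one_pos,
      eventually_gt_atTop 0] with n hkn hK1 hn
    refine sepNum_le_pow_of_card_farTimes_le hP (by linarith [min_le_left (ε / 2) (ε₀ / 2)])
      (by exact_mod_cast ((div_lt_one (by positivity)).1 hK1).le) fun x y => ?_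
    rw [← ncard_eq_card_farTimes]
    exact hfar n hkn x y
  obtain ⟨n, hcn, hsn, hlog⟩ := (hfreq.and_eventually (hbound.and
    ((tendsto_log_pow_div_atTop hK (exp 1 * #P)).eventually_lt_const hc))).exists
  have hs : 0 < (sepNum T n ε : ℝ) :=
    Nat.cast_pos.2 (Nat.pos_of_ne_zero fun h => by simp [h] at hcn; linarith)
  have := div_le_div_of_nonneg_right (log_le_log hs hsn) n.cast_nonneg
  linarith

/-- if `T` has almost specification with mistake function `g` and constants
`k_g`, and `h_top(T) > 0`, then there exist `σ > 2δ > 0`, `N ≥ k_g(δ)` and points `x, y`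
that are `(2g; N, σ)`-separated. -/
theorem separated_of_entropy_positive {X : Type*} [MetricSpace X] [CompactSpace X]
    (T : X → X) (hT : Continuous T) (ε₀ : ℝ) (g : ℕ → ℝ → ℕ)
    (hg : IsMistakeFunction ε₀ g)
    (kg : ℝ → ℕ) (hspec : AlmostSpecWith T g kg)
    (hpos : 0 < topEntropy T) :
    ∃ σ δ : ℝ, 0 < δ ∧ 2 * δ < σ ∧ ∃ N : ℕ, kg δ ≤ N ∧ ∃ x y : X,
      2 * g N σ < Set.ncard {j : ℕ | j < N ∧ σ < dist (T^[j] x) (T^[j] y)} :=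
  separated_of_entropy_positive_general T ε₀ g hg kg hpos
end

section
/- Let (X,d) be a compact metric space and T : X → X a continuous map satisfying the almost specification property with mistake function g (with constants k_g), where moreover g(n,ε) is nondecreasing in ε. Suppose there exist real numbers σ > 2δ > 0, an integer N ∈ ℕ with N ≥ k_g(δ), and points x, y ∈ X that are (2g; N, σ)-separated. Then for every m ∈ ℕ with m ≥ 1 one has s_{mN}(X, σ − 2δ) ≥ 2^m. -/
/-!
Encode a word `w ∈ {x, y}^m` by a point `z_w` whose orbit, by almost specification, follows in
its `i`-th block of length `N` the orbit of `w i` up to `g(N, δ) ≤ g(N, σ)` mistakes. If `w` and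
`w'` differ in block `i`, the two blocks together miss at most `2 g(N, δ)` of the more than
`2 g(N, σ)` times at which the orbits of `x` and `y` are `σ`-apart, so at a common remaining time
`z_w` and `z_w'` are `(σ - 2δ)`-apart. The `2^m` points `z_w` are thus `(mN, σ - 2δ)`-separated.
-/

open Filter Set

theorem Finset.inter_inter_nonempty_of_card_sdiff_add_card_sdiff_lt {α : Type*} [DecidableEq α]
    {s t u : Finset α} (h : (s \ t).card + (s \ u).card < s.card) : (s ∩ t ∩ u).Nonempty := by
  rw [Finset.nonempty_iff_ne_empty]
  intro hempty
  have hcover : s ⊆ (s \ t) ∪ (s \ u) := fun j hj => by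
    have : j ∉ s ∩ t ∩ u := hempty ▸ Finset.notMem_empty j
    simp only [Finset.mem_inter, Finset.mem_union, Finset.mem_sdiff] at this ⊢
    tauto
  exact (Finset.card_le_card hcover |>.trans (Finset.card_union_le _ _)).not_gt h

theorem Finset.card_sdiff_le_of_card_sub_le {α : Type*} [DecidableEq α] {r s t : Finset α} {k : ℕ}
    (hs : s ⊆ r) (ht : t ⊆ r) (hcard : r.card - k ≤ t.card) : (s \ t).card ≤ k := by
  have h1 := Finset.card_le_card (Finset.sdiff_subset_sdiff hs (le_refl t))
  have h2 := Finset.card_sdiff_of_subset ht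
  have h3 := Finset.card_le_card ht
  omega

def IsDynSeparated {X : Type*} [MetricSpace X] (T : X → X) (n : ℕ) (ε : ℝ) (s : Set X) : Prop :=
  ∀ a ∈ s, ∀ b ∈ s, a ≠ b → ∃ j < n, ε < dist (T^[j] a) (T^[j] b)

namespace IsDynSeparated

variable {X : Type*} [MetricSpace X] {T : X → X} {n : ℕ} {ε : ℝ} {s : Set X}

theorem isDynNetIn (hs : IsDynSeparated T n ε s) :
    Dynamics.IsDynNetIn T univ {p | dist p.1 p.2 < ε / 2} n s := by
  refine ⟨subset_univ s, fun a ha b hb hab => disjoint_left.2 fun c hac hbc => ?_⟩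
  obtain ⟨j, hj, hjd⟩ := hs a ha b hb hab
  have hac' := Dynamics.mem_ball_dynEntourage.1 hac j hj
  have hbc' := Dynamics.mem_ball_dynEntourage.1 hbc j hj
  have := dist_triangle_right (T^[j] a) (T^[j] b) (T^[j] c)
  simp only [UniformSpace.ball, mem_preimage, mem_ofPred_eq] at hac' hbc'
  linarith

/-- `sepNum` is an `sSup` in `ℕ`, which is `0` for unbounded sets: the bound comes from the
finiteness of minimal dynamical covers of a compact space. -/
theorem card_le_sepNum [CompactSpace X] (hT : Continuous T) (hε : 0 < ε) {F : Finset X}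
    (hF : IsDynSeparated T n ε F) : F.card ≤ sepNum T n ε := by
  obtain ⟨K, hK⟩ := ENat.ne_top_iff_exists.1
    (Dynamics.coverMincard_finite_of_isCompact_uniformContinuous isCompact_univ
      (CompactSpace.uniformContinuous_of_continuous hT) (Metric.dist_mem_uniformity (half_pos hε))
      n).ne
  have hbdd : BddAbove {k | ∃ F : Finset X, IsDynSeparated T n ε F ∧ F.card = k} := by
    refine ⟨K, ?_⟩
    rintro _ ⟨F, hF, rfl⟩
    have := hF.isDynNetIn.card_le_netMaxcard.trans (Dynamics.netMaxcard_le_coverMincard T univ n)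
    rw [← hK] at this
    exact_mod_cast this
  exact le_csSup hbdd ⟨F, hF, rfl⟩

end IsDynSeparated

theorem card_le_sepNum_of_pairwise {X ι : Type*} [MetricSpace X] [CompactSpace X] [Fintype ι]
    {T : X → X} (hT : Continuous T) {n : ℕ} {ε : ℝ} (hε : 0 < ε) {z : ι → X}
    (hz : ∀ i i', i ≠ i' → ∃ j < n, ε < dist (T^[j] (z i)) (T^[j] (z i'))) :
    Fintype.card ι ≤ sepNum T n ε := by
  classical
  have hinj : Function.Injective z := fun i i' h => by
    by_contra hne
    obtain ⟨j, -, hj⟩ := hz i i' hne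
    rw [h, dist_self] at hj
    linarith
  rw [← Finset.card_univ, ← Finset.card_image_of_injective _ hinj]
  refine IsDynSeparated.card_le_sepNum hT hε fun a ha b hb hab => ?_
  simp only [Finset.coe_image, Finset.coe_univ, image_univ, mem_range] at ha hb
  obtain ⟨i, rfl⟩ := ha
  obtain ⟨i', rfl⟩ := hb
  exact hz i i' fun h => hab (h ▸ rfl)

theorem exists_lt_dist_iterate_of_shift {X : Type*} [MetricSpace X] {T : X → X} {ε : ℝ}
    {k n n' : ℕ} (hkn : k + n ≤ n') {a b : X}
    (h : ∃ j < n, ε < dist (T^[j] (T^[k] a)) (T^[j] (T^[k] b))) :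
    ∃ j < n', ε < dist (T^[j] a) (T^[j] b) := by
  obtain ⟨j, hj, hjd⟩ := h
  exact ⟨j + k, by omega, by rwa [Function.iterate_add_apply, Function.iterate_add_apply]⟩

theorem exists_lt_dist_of_mem_mistakeBall_s7 {X : Type*} [MetricSpace X] {T : X → X}
    {g : ℕ → ℝ → ℕ} {n : ℕ} {σ δ : ℝ} {x y z z' : X}
    (hsep : 2 * g n δ < Set.ncard {j : ℕ | j < n ∧ σ < dist (T^[j] x) (T^[j] y)})
    (hz : z ∈ mistakeBall T g n x δ) (hz' : z' ∈ mistakeBall T g n y δ) :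
    ∃ j < n, σ - 2 * δ < dist (T^[j] z) (T^[j] z') := by
  classical
  obtain ⟨Λ, hΛ, hΛcard, hΛdist⟩ := hz
  obtain ⟨Λ', hΛ', hΛ'card, hΛ'dist⟩ := hz'
  set S := (Finset.range n).filter fun j => σ < dist (T^[j] x) (T^[j] y)
  have hS : {j : ℕ | j < n ∧ σ < dist (T^[j] x) (T^[j] y)} = S := by ext; simp [S]
  rw [hS, ncard_coe_finset] at hsep
  have hmiss := Finset.card_sdiff_le_of_card_sub_le (s := S) (Finset.filter_subset _ _) hΛ
    (by rwa [Finset.card_range])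
  have hmiss' := Finset.card_sdiff_le_of_card_sub_le (s := S) (Finset.filter_subset _ _) hΛ'
    (by rwa [Finset.card_range])
  obtain ⟨j, hj⟩ := Finset.inter_inter_nonempty_of_card_sdiff_add_card_sdiff_lt
    (s := S) (t := Λ) (u := Λ') (by omega)
  simp only [Finset.mem_inter, S, Finset.mem_filter, Finset.mem_range] at hj
  obtain ⟨⟨⟨hjn, hjσ⟩, hjΛ⟩, hjΛ'⟩ := hj
  refine ⟨j, hjn, ?_⟩
  have := dist_triangle4 (T^[j] x) (T^[j] z) (T^[j] z') (T^[j] y)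
  linarith [hΛdist j hjΛ, dist_comm (T^[j] z') (T^[j] y) ▸ hΛ'dist j hjΛ']

theorem AlmostSpecWith.exists_shadowing_blocks {X : Type*} [MetricSpace X] {T : X → X}
    {g : ℕ → ℝ → ℕ} {kg : ℝ → ℕ} (hspec : AlmostSpecWith T g kg) {δ : ℝ} (hδ : 0 < δ)
    {N : ℕ} (hN : kg δ ≤ N) {m : ℕ} (xs : Fin m → X) :
    ∃ z : X, ∀ i : Fin m, T^[i * N] z ∈ mistakeBall T g N (xs i) δ := by
  obtain ⟨z, hz⟩ := hspec m (fun _ => δ) (fun _ => hδ) xs (fun _ => N) (fun _ => hN)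
  refine ⟨z, fun i => ?_⟩
  simpa only [Finset.sum_const, smul_eq_mul, Fin.card_Iio] using hz i

theorem sepNum_exponential_growth_general {X : Type*} [MetricSpace X] [CompactSpace X]
    (T : X → X) (hT : Continuous T) (g : ℕ → ℝ → ℕ)
    (hmono : ∀ n : ℕ, ∀ ε ε' : ℝ, 0 < ε → ε ≤ ε' → g n ε ≤ g n ε')
    (kg : ℝ → ℕ) (hspec : AlmostSpecWith T g kg)
    (σ δ : ℝ) (hδ : 0 < δ) (hσ : 2 * δ < σ)
    (N : ℕ) (hNk : kg δ ≤ N) (x y : X)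
    (hsep : 2 * g N σ < Set.ncard {j : ℕ | j < N ∧ σ < dist (T^[j] x) (T^[j] y)}) :
    ∀ m : ℕ, 1 ≤ m → 2 ^ m ≤ sepNum T (m * N) (σ - 2 * δ) := by
  intro m _
  have hsepδ : 2 * g N δ < Set.ncard {j : ℕ | j < N ∧ σ < dist (T^[j] x) (T^[j] y)} :=
    lt_of_le_of_lt (Nat.mul_le_mul_left 2 (hmono N δ σ hδ (by linarith))) hsep
  choose z hz using fun w : Fin m → Bool =>
    hspec.exists_shadowing_blocks hδ hNk fun i => cond (w i) x y
  have hblock : ∀ w w' (i : Fin m), w i = true → w' i = false →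
      ∃ j < N, σ - 2 * δ < dist (T^[j] (T^[i * N] (z w))) (T^[j] (T^[i * N] (z w'))) :=
    fun w w' i hw hw' => exists_lt_dist_of_mem_mistakeBall_s7 hsepδ
      (by simpa only [hw, cond_true] using hz w i) (by simpa only [hw', cond_false] using hz w' i)
  calc 2 ^ m = Fintype.card (Fin m → Bool) := by simp
    _ ≤ sepNum T (m * N) (σ - 2 * δ) := card_le_sepNum_of_pairwise hT (by linarith)
      fun w w' hne => by
        obtain ⟨i, hi⟩ := Function.ne_iff.1 hne
        apply exists_lt_dist_iterate_of_shift (k := i * N) (n := N)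
          (by nlinarith [i.isLt] : (i : ℕ) * N + N ≤ m * N)
        cases hw : w i <;> cases hw' : w' i
        case false.true =>
          obtain ⟨j, hj, hjd⟩ := hblock w' w i hw' hw
          exact ⟨j, hj, dist_comm (T^[j] _) _ ▸ hjd⟩
        case true.false => exact hblock w w' i hw hw'
        all_goals exact absurd (hw.trans hw'.symm) hi

/-- under the hypotheses of Statement 4, `s_{mN}(X, σ - 2δ) ≥ 2^m` for all
`m ≥ 1`. -/
theorem sepNum_exponential_growth {X : Type*} [MetricSpace X] [CompactSpace X]
    (T : X → X) (hT : Continuous T) (ε₀ : ℝ) (g : ℕ → ℝ → ℕ)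
    (hg : IsMistakeFunction ε₀ g)
    (hmono : ∀ n : ℕ, ∀ ε ε' : ℝ, 0 < ε → ε ≤ ε' → g n ε ≤ g n ε')
    (kg : ℝ → ℕ) (hspec : AlmostSpecWith T g kg)
    (σ δ : ℝ) (hδ : 0 < δ) (hσ : 2 * δ < σ)
    (N : ℕ) (hNk : kg δ ≤ N) (x y : X)
    (hsep : 2 * g N σ < Set.ncard {j : ℕ | j < N ∧ σ < dist (T^[j] x) (T^[j] y)}) :
    ∀ m : ℕ, 1 ≤ m → 2 ^ m ≤ sepNum T (m * N) (σ - 2 * δ) :=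
  sepNum_exponential_growth_general T hT g hmono kg hspec σ δ hδ hσ N hNk x y hsep
end
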